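/- arXiv:math-ph/0509055 — 2 statements merged into one kernel-verified Lean document; each statement's English description precedes it below -/
import Mathlib

section
/- Let v₁, v₂, v₃, v₄ be four pairwise distinct unit vectors in ℝ³ such that the inner products vᵢ·vⱼ are all equal to the same real number c for every pair i ≠ j. Then c = −1/3. -/
theorem equiangular_four_unit_vectors (v : Fin 4 → EuclideanSpace ℝ (Fin 3)) (c : ℝ)
    (hdist : Function.Injective v) (hunit : ∀ i, ‖v i‖ = 1)
    (hinner : ∀ i j, i ≠ j → inner ℝ (v i) (v j) = c) : c = -1 / 3 := by
  have h3 : Module.finrank ℝ (EuclideanSpace ℝ (Fin 3)) = 3 := by simp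
  have hnli : ¬ LinearIndependent ℝ v := by
    intro h
    have := h.fintype_card_le_finrank
    rw [h3, Fintype.card_fin] at this
    omega
  rw [Fintype.not_linearIndependent_iff] at hnli
  obtain ⟨g, hg, i0, hi0⟩ := hnli
  have hc1 : c ≠ 1 := by
    intro h
    have h01 := hinner 0 1 (by decide)
    rw [h] at h01
    have : v 0 = v 1 := (inner_eq_one_iff_of_norm_eq_one (hunit 0) (hunit 1)).mp h01
    exact (by decide : (0:Fin 4) ≠ 1) (hdist this)
  set S := ∑ i, g i with hS
  have key : ∀ j, g j * (1 - c) + c * S = 0 := by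
    intro j
    have h0 : (inner ℝ (v j) (∑ i, g i • v i) : ℝ) = 0 := by rw [hg, inner_zero_right]
    rw [inner_sum] at h0
    simp_rw [real_inner_smul_right] at h0
    have hterm : ∀ i ∈ Finset.univ, g i * (inner ℝ (v j) (v i) : ℝ)
        = c * g i + (if i = j then g j * (1 - c) else 0) := by
      intro i _
      by_cases hij : i = j
      · subst hij
        have : (inner ℝ (v i) (v i) : ℝ) = 1 := by
          rw [real_inner_self_eq_norm_sq, hunit i]; norm_num
        rw [this]; simp; ring
      · rw [real_inner_comm, hinner i j hij]
        simp [hij]; ring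
    rw [Finset.sum_congr rfl hterm, Finset.sum_add_distrib, Finset.sum_ite_eq'] at h0
    simp only [Finset.mem_univ, if_true, ← Finset.mul_sum] at h0
    linarith [h0]
  have heq : ∀ j, g j = g i0 := by
    intro j
    have h1 := key j
    have h2 := key i0
    have : g j * (1 - c) = g i0 * (1 - c) := by linarith
    have hc : (1 - c) ≠ 0 := fun h => hc1 (by linarith)
    exact mul_right_cancel₀ hc this
  have hS4 : S = 4 * g i0 := by
    rw [hS, Fin.sum_univ_four, heq 0, heq 1, heq 2, heq 3]; ring
  have hk := key i0
  rw [hS4] at hk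
  have : g i0 * (1 + 3 * c) = 0 := by linarith
  rcases mul_eq_zero.mp this with h | h
  · exact absurd h hi0
  · linarith
end

section
/- Fix α with 0 < α < π. For ε ∈ (0,1), let I(ε) = ∫∫_{[ε,1]×[ε,1]} dt ds/(t² + s² − 2ts·cos α). Then the limit as ε → 0⁺ of I(ε)/ln(1/ε) exists and equals (π − α)/sin α. -/
open Real Filter Set Topology MeasureTheory intervalIntegral
open scoped Interval

/-! Completing the square, `t² + s² - 2 t s cos α = (t sin α)² + (s - t cos α)²`, so the inner
integral is a difference of arctangents divided by `t sin α`. Taken over `s ∈ [0, ∞)` it would be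
exactly `(π - α) / (t sin α)`; cutting it at `s = ε` and at `s = 1` costs at most `ε / (t sin α)²`
and `2 / (1 - cos α)`. Integrating over `t ∈ [ε, 1]` then gives
`I(ε) = (π - α) / sin α · log (1 / ε) + O(1)`. -/

namespace Real

theorem lipschitzWith_one_arctan : LipschitzWith 1 arctan := by
  refine lipschitzWith_of_nnnorm_deriv_le differentiable_arctan fun x => ?_
  rw [deriv_arctan, ← NNReal.coe_le_coe, coe_nnnorm, NNReal.coe_one, Real.norm_eq_abs,
    abs_of_pos (by positivity)]
  exact div_le_one_of_le₀ (by nlinarith) (by positivity)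

theorem arctan_sub_arctan_le_sub {x y : ℝ} (h : y ≤ x) : arctan x - arctan y ≤ x - y := by
  have := lipschitzWith_one_arctan.dist_le_mul x y
  rw [NNReal.coe_one, one_mul, Real.dist_eq, Real.dist_eq, abs_of_nonneg (sub_nonneg.2 h)] at this
  exact (le_abs_self _).trans this

theorem pi_div_two_sub_arctan_le_inv {x : ℝ} (hx : 0 < x) : π / 2 - arctan x ≤ x⁻¹ := by
  rw [← arctan_inv_of_pos hx]
  simpa using arctan_sub_arctan_le_sub (inv_nonneg.2 hx.le)

theorem arctan_neg_cot {α : ℝ} (h0 : 0 < α) (h1 : α < π) :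
    arctan (-(cos α / sin α)) = α - π / 2 := by
  rw [arctan_neg, ← cos_pi_div_two_sub, ← sin_pi_div_two_sub, ← tan_eq_sin_div_cos,
    arctan_tan (by linarith) (by linarith)]
  ring

end Real

theorem tendsto_div_of_mul_sub_le_of_le_mul {ι : Type*} {l : Filter ι} {f g : ι → ℝ} {L C : ℝ}
    (hg : Tendsto g l atTop) (hf : ∀ᶠ x in l, L * g x - C ≤ f x ∧ f x ≤ L * g x) :
    Tendsto (fun x => f x / g x) l (𝓝 L) := by
  have hlower : Tendsto (fun x => L - C / g x) l (𝓝 L) := by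
    simpa using tendsto_const_nhds.sub (tendsto_const_nhds.div_atTop hg)
  refine tendsto_of_tendsto_of_tendsto_of_le_of_le' hlower tendsto_const_nhds ?_ ?_ <;>
    filter_upwards [hf, hg.eventually_gt_atTop 0] with x ⟨hlo, hhi⟩ hgx
  · rw [le_div_iff₀ hgx, sub_mul, div_mul_cancel₀ _ hgx.ne']
    linarith
  · rwa [div_le_iff₀ hgx]

theorem integral_inv_sq_of_pos {a b : ℝ} (ha : 0 < a) (hb : 0 < b) :
    ∫ t in a..b, (t ^ 2)⁻¹ = a⁻¹ - b⁻¹ := by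
  have := integral_zpow (a := a) (b := b) (n := -2)
    (Or.inr ⟨by norm_num, notMem_uIcc_of_lt ha hb⟩)
  norm_num at this
  rw [this]
  ring

noncomputable def wedgeKernel (α t s : ℝ) : ℝ := 1 / (t ^ 2 + s ^ 2 - 2 * t * s * cos α)

theorem wedgeKernel_eq (α t s : ℝ) :
    wedgeKernel α t s = ((t * sin α) ^ 2 + (s - t * cos α) ^ 2)⁻¹ := by
  rw [wedgeKernel, one_div]
  congr 1
  linear_combination (-t ^ 2) * sin_sq_add_cos_sq α

section Wedge

variable {α : ℝ}

theorem integral_wedgeKernel {t : ℝ} (h : 0 < t * sin α) (p q : ℝ) :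
    ∫ s in p..q, wedgeKernel α t s = (t * sin α)⁻¹ *
      (arctan ((q - t * cos α) / (t * sin α)) - arctan ((p - t * cos α) / (t * sin α))) := by
  simp_rw [wedgeKernel_eq]
  rw [intervalIntegral.integral_comp_sub_right (fun x => ((t * sin α) ^ 2 + x ^ 2)⁻¹),
    integral_inv_sq_add_sq h.ne']

theorem continuousOn_integral_wedgeKernel (hσ : 0 < sin α) (p q : ℝ) :
    ContinuousOn (fun t => ∫ s in p..q, wedgeKernel α t s) (Ioi 0) := by
  refine ContinuousOn.congr ?_ fun t ht => integral_wedgeKernel (mul_pos ht hσ) p q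
  have : ∀ t ∈ Ioi (0 : ℝ), t * sin α ≠ 0 := fun t ht => (mul_pos ht hσ).ne'
  fun_prop (disch := assumption)

theorem arctan_near_vertex_bounds (h0 : 0 < α) (h1 : α < π) {ε t : ℝ} (hε : 0 ≤ ε)
    (ht : 0 < t) :
    α - π / 2 ≤ arctan ((ε - t * cos α) / (t * sin α)) ∧
      arctan ((ε - t * cos α) / (t * sin α)) ≤ α - π / 2 + ε / (t * sin α) := by
  have hσ : 0 < sin α := sin_pos_of_pos_of_lt_pi h0 h1
  have hx : 0 ≤ ε / (t * sin α) := by positivity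
  have hsplit : (ε - t * cos α) / (t * sin α) = ε / (t * sin α) + -(cos α / sin α) := by
    field_simp; ring
  rw [hsplit, ← arctan_neg_cot h0 h1]
  constructor
  · exact arctan_le_arctan_iff.2 (le_add_of_nonneg_left hx)
  · linarith [arctan_sub_arctan_le_sub (le_add_of_nonneg_left hx : -(cos α / sin α) ≤ _)]

theorem pi_div_two_sub_le_arctan_far_end (h0 : 0 < α) (h1 : α < π) {t : ℝ} (ht : 0 < t)
    (ht1 : t ≤ 1) :
    π / 2 - 2 * t * sin α / (1 - cos α) ≤ arctan ((1 - t * cos α) / (t * sin α)) := by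
  have hσ : 0 < sin α := sin_pos_of_pos_of_lt_pi h0 h1
  have hc : cos α < 1 := by simpa using cos_lt_cos_of_nonneg_of_le_pi le_rfl h1.le h0
  -- `1 - t cos α` is affine in `t`, so on `[0, 1]` it stays above `min 1 (1 - cos α)`.
  have hb : (1 - cos α) / 2 ≤ 1 - t * cos α := by
    nlinarith [mul_nonneg (sub_nonneg.2 ht1) (neg_le_iff_add_nonneg.1 (neg_one_le_cos α)),
      mul_nonneg ht.le (sub_pos.2 hc).le]
  have hx : 0 < (1 - t * cos α) / (t * sin α) := by
    have : 0 < 1 - t * cos α := by linarith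
    positivity
  have := pi_div_two_sub_arctan_le_inv hx
  rw [inv_div] at this
  have : t * sin α / (1 - t * cos α) ≤ 2 * t * sin α / (1 - cos α) := by
    rw [div_le_div_iff₀ (by linarith) (by linarith)]
    nlinarith [mul_pos ht hσ]
  linarith

theorem integral_wedgeKernel_le (h0 : 0 < α) (h1 : α < π) {ε t : ℝ} (hε : 0 ≤ ε)
    (ht : 0 < t) :
    ∫ s in ε..1, wedgeKernel α t s ≤ (π - α) / sin α * t⁻¹ := by
  have hr : 0 < t * sin α := mul_pos ht (sin_pos_of_pos_of_lt_pi h0 h1)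
  rw [integral_wedgeKernel hr]
  calc (t * sin α)⁻¹ * (arctan ((1 - t * cos α) / (t * sin α)) -
        arctan ((ε - t * cos α) / (t * sin α)))
      ≤ (t * sin α)⁻¹ * (π / 2 - (α - π / 2)) := by
        gcongr
        · exact (arctan_lt_pi_div_two _).le
        · exact (arctan_near_vertex_bounds h0 h1 hε ht).1
    _ = (π - α) / sin α * t⁻¹ := by field_simp; ring

theorem le_integral_wedgeKernel (h0 : 0 < α) (h1 : α < π) {ε t : ℝ} (hε : 0 ≤ ε) (ht : 0 < t)
    (ht1 : t ≤ 1) :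
    (π - α) / sin α * t⁻¹ - 2 / (1 - cos α) - ε / sin α ^ 2 * (t ^ 2)⁻¹ ≤
      ∫ s in ε..1, wedgeKernel α t s := by
  have hσ : 0 < sin α := sin_pos_of_pos_of_lt_pi h0 h1
  have hr : 0 < t * sin α := mul_pos ht hσ
  have hc : cos α < 1 := by simpa using cos_lt_cos_of_nonneg_of_le_pi le_rfl h1.le h0
  rw [integral_wedgeKernel hr]
  calc (π - α) / sin α * t⁻¹ - 2 / (1 - cos α) - ε / sin α ^ 2 * (t ^ 2)⁻¹
      = (t * sin α)⁻¹ * ((π / 2 - 2 * t * sin α / (1 - cos α)) -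
          (α - π / 2 + ε / (t * sin α))) := by
        field_simp; ring
    _ ≤ (t * sin α)⁻¹ * (arctan ((1 - t * cos α) / (t * sin α)) -
        arctan ((ε - t * cos α) / (t * sin α))) := by
        gcongr
        · exact pi_div_two_sub_le_arctan_far_end h0 h1 ht ht1
        · exact (arctan_near_vertex_bounds h0 h1 hε ht).2

theorem intervalIntegrable_integral_wedgeKernel (hσ : 0 < sin α) {a b : ℝ} (ha : 0 < a)
    (hb : 0 < b) (p q : ℝ) :
    IntervalIntegrable (fun t => ∫ s in p..q, wedgeKernel α t s) volume a b :=
  ((continuousOn_integral_wedgeKernel hσ p q).mono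
    fun _ hx => (lt_min ha hb).trans_le hx.1).intervalIntegrable

theorem integral_integral_wedgeKernel_le (h0 : 0 < α) (h1 : α < π) {ε : ℝ} (hε0 : 0 < ε)
    (hε1 : ε ≤ 1) :
    ∫ t in ε..1, ∫ s in ε..1, wedgeKernel α t s ≤ (π - α) / sin α * log (1 / ε) := by
  have h0ε : (0 : ℝ) ∉ [[ε, 1]] := notMem_uIcc_of_lt hε0 one_pos
  calc ∫ t in ε..1, ∫ s in ε..1, wedgeKernel α t s
      ≤ ∫ t in ε..1, (π - α) / sin α * t⁻¹ :=
        intervalIntegral.integral_mono_on hε1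
          (intervalIntegrable_integral_wedgeKernel (sin_pos_of_pos_of_lt_pi h0 h1) hε0 one_pos
            _ _)
          ((intervalIntegrable_inv (fun _ hx => ne_of_mem_of_not_mem hx h0ε)
            continuousOn_id).const_mul _)
          fun t ht => integral_wedgeKernel_le h0 h1 hε0.le (hε0.trans_le ht.1)
    _ = (π - α) / sin α * log (1 / ε) := by
        rw [intervalIntegral.integral_const_mul, integral_inv_of_pos hε0 one_pos]

theorem le_integral_integral_wedgeKernel (h0 : 0 < α) (h1 : α < π) {ε : ℝ} (hε0 : 0 < ε)
    (hε1 : ε ≤ 1) :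
    (π - α) / sin α * log (1 / ε) - (2 / (1 - cos α) + (sin α ^ 2)⁻¹) ≤
      ∫ t in ε..1, ∫ s in ε..1, wedgeKernel α t s := by
  have hc : cos α < 1 := by simpa using cos_lt_cos_of_nonneg_of_le_pi le_rfl h1.le h0
  have h0ε : (0 : ℝ) ∉ [[ε, 1]] := notMem_uIcc_of_lt hε0 one_pos
  have hinv : IntervalIntegrable (fun t : ℝ => t⁻¹) volume ε 1 :=
    intervalIntegrable_inv (fun _ hx => ne_of_mem_of_not_mem hx h0ε) continuousOn_id
  have hinvsq : IntervalIntegrable (fun t : ℝ => (t ^ 2)⁻¹) volume ε 1 :=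
    intervalIntegrable_inv (fun _ hx => pow_ne_zero 2 (ne_of_mem_of_not_mem hx h0ε))
      (continuous_pow 2).continuousOn
  calc (π - α) / sin α * log (1 / ε) - (2 / (1 - cos α) + (sin α ^ 2)⁻¹)
      ≤ (π - α) / sin α * log (1 / ε) - (1 - ε) * (2 / (1 - cos α)) -
          ε / sin α ^ 2 * (ε⁻¹ - 1) := by
        have : ε / sin α ^ 2 * (ε⁻¹ - 1) = (sin α ^ 2)⁻¹ - ε / sin α ^ 2 := by
          field_simp
        have : 0 ≤ 2 / (1 - cos α) := div_nonneg zero_le_two (sub_pos.2 hc).le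
        nlinarith [div_nonneg hε0.le (sq_nonneg (sin α))]
    _ = ∫ t in ε..1,
          ((π - α) / sin α * t⁻¹ - 2 / (1 - cos α) - ε / sin α ^ 2 * (t ^ 2)⁻¹) := by
        rw [intervalIntegral.integral_sub ((hinv.const_mul _).sub intervalIntegrable_const)
            (hinvsq.const_mul _), intervalIntegral.integral_sub (hinv.const_mul _)
            intervalIntegrable_const, intervalIntegral.integral_const_mul,
          intervalIntegral.integral_const_mul, integral_inv_of_pos hε0 one_pos,
          integral_inv_sq_of_pos hε0 one_pos, intervalIntegral.integral_const, smul_eq_mul]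
        ring_nf
    _ ≤ ∫ t in ε..1, ∫ s in ε..1, wedgeKernel α t s :=
        intervalIntegral.integral_mono_on hε1
          (((hinv.const_mul _).sub intervalIntegrable_const).sub (hinvsq.const_mul _))
          (intervalIntegrable_integral_wedgeKernel (sin_pos_of_pos_of_lt_pi h0 h1) hε0 one_pos
            _ _)
          fun t ht => le_integral_wedgeKernel h0 h1 hε0.le (hε0.trans_le ht.1) ht.2

end Wedge

theorem double_integral_log_asymptotics (α : ℝ) (h0 : 0 < α) (h1 : α < π) :
    Tendsto
      (fun ε : ℝ =>
        (∫ t in ε..1, ∫ s in ε..1, 1 / (t ^ 2 + s ^ 2 - 2 * t * s * Real.cos α)) /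
          Real.log (1 / ε))
      (nhdsWithin 0 (Ioo 0 1)) (nhds ((π - α) / Real.sin α)) := by
  have hlog : Tendsto (fun ε : ℝ => log (1 / ε)) (𝓝[Ioo 0 1] 0) atTop := by
    simpa only [one_div, log_inv, Function.comp_def] using
      (tendsto_neg_atBot_atTop.comp tendsto_log_nhdsGT_zero).mono_left
        (nhdsWithin_mono _ Ioo_subset_Ioi_self)
  refine tendsto_div_of_mul_sub_le_of_le_mul (C := 2 / (1 - cos α) + (sin α ^ 2)⁻¹) hlog ?_
  filter_upwards [self_mem_nhdsWithin] with ε ⟨hε0, hε1⟩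
  exact ⟨le_integral_integral_wedgeKernel h0 h1 hε0 hε1.le,
    integral_integral_wedgeKernel_le h0 h1 hε0 hε1.le⟩
end
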